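/- arXiv:1003.1616 — 5 statements merged into one kernel-verified Lean document; each statement's English description precedes it below -/
import Mathlib

section
/- Let X be a Hilbert space, E(u) = ½⟨Lu,u⟩ + K(u) with L the duality (Riesz) operator so that ⟨Lu,u⟩ = ‖u‖², and C(u) = ⟨L₀u,u⟩ + K₀(u), where K and K₀ are of higher than quadratic order at 0: K(εv)/ε² → 0 and K₀(εv)/ε² → 0 uniformly for ‖v‖_Q ≤ 1 as ε → 0. Then e₀ := lim_{ε→0} inf{ E_Q(u)/|C_Q(u)| : ‖u‖_Q ≤ ε, |C_Q(u)| > 0 } equals inf_{u ≠ 0} (½⟨Lu,u⟩_Q)/|⟨L₀u,u⟩_Q|. -/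
/-!
Scaling `u ↦ t • u` with `t → 0⁺` turns the remainders into `K (t • u) / t ^ 2 → 0` and
`K0 (t • u) / t ^ 2 → 0`, so the local ratio at `t • u` tends to the quadratic ratio at `u`;
hence every local infimum is at most the quadratic one. Conversely, if
`a * |QL0 u| ≤ QL u / 2` for all `u`, then on a small enough ball `|K|, |K0| ≤ δ * QL`, and
there the local ratio is at least `a * (1 - 2 * δ) / (1 + 2 * a * δ)`, which tends to `a`.
-/

open Filter Topology

-- The factor is `(1/2 - δ) q / ((1/(2a) + δ) q)`: the lower bound of the numerator over the
-- upper bound of the denominator, cleared of the division by `a`.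
theorem mul_abs_add_le_half_add {a δ q p k k₀ : ℝ} (ha : 0 ≤ a) (hδ : 0 ≤ δ) (hδ' : δ ≤ 1 / 2)
    (hap : a * |p| ≤ q / 2) (hk : |k| ≤ δ * q) (hk₀ : |k₀| ≤ δ * q) :
    a * (1 - 2 * δ) / (1 + 2 * a * δ) * |p + k₀| ≤ q / 2 + k := by
  rw [div_mul_eq_mul_div, div_le_iff₀ (by positivity)]
  have hden : a * |p + k₀| ≤ q / 2 * (1 + 2 * a * δ) := by
    nlinarith [abs_add_le p k₀, mul_le_mul_of_nonneg_left (abs_add_le p k₀) ha]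
  calc a * (1 - 2 * δ) * |p + k₀| = (1 - 2 * δ) * (a * |p + k₀|) := by ring
    _ ≤ (1 - 2 * δ) * (q / 2 * (1 + 2 * a * δ)) := by gcongr; linarith
    _ = (q / 2 - δ * q) * (1 + 2 * a * δ) := by ring
    _ ≤ (q / 2 + k) * (1 + 2 * a * δ) := by gcongr; linarith [neg_abs_le k]

section

variable {X : Type*}

noncomputable def smallBallRatioInf (QL QL0 K K0 : X → ℝ) (ε : ℝ) : EReal :=
  sInf {r : EReal | ∃ u : X, QL u ≤ ε ^ 2 ∧ 0 < |QL0 u + K0 u| ∧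
    r = (((QL u / 2 + K u) / |QL0 u + K0 u| : ℝ) : EReal)}

noncomputable def quadraticRatioInf (QL QL0 : X → ℝ) : EReal :=
  sInf {r : EReal | ∃ u : X, QL0 u ≠ 0 ∧ r = ((QL u / 2 / |QL0 u| : ℝ) : EReal)}

variable {QL QL0 : X → ℝ}

theorem mul_abs_le_half_of_coe_le_quadraticRatioInf (hQLnn : ∀ u, 0 ≤ QL u) {a : ℝ}
    (ha : (a : EReal) ≤ quadraticRatioInf QL QL0) (u : X) : a * |QL0 u| ≤ QL u / 2 := by
  by_cases hu : QL0 u = 0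
  · rw [hu, abs_zero, mul_zero]
    linarith [hQLnn u]
  · have := ha.trans (sInf_le ⟨u, hu, rfl⟩)
    rwa [EReal.coe_le_coe_iff, le_div_iff₀ (abs_pos.2 hu)] at this

end

section

variable {X : Type*} [AddCommGroup X] [Module ℝ X]

/-- `K (ε • v) = o(ε ^ 2)` as `ε → 0⁺`, uniformly over `Q v ≤ 1`. -/
def IsSuperquadratic (Q K : X → ℝ) : Prop :=
  ∀ δ : ℝ, 0 < δ → ∃ ε₀ : ℝ, 0 < ε₀ ∧ ∀ (ε : ℝ) (v : X),
    0 < ε → ε ≤ ε₀ → Q v ≤ 1 → |K (ε • v)| ≤ δ * ε ^ 2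

variable {Q K : X → ℝ}

theorem IsSuperquadratic.abs_le_mul (hQnn : ∀ u, 0 ≤ Q u)
    (hQ : ∀ (c : ℝ) (u : X), Q (c • u) = c ^ 2 * Q u) (hK : IsSuperquadratic Q K)
    {δ : ℝ} (hδ : 0 < δ) : ∃ ε₀ : ℝ, 0 < ε₀ ∧ ∀ u, Q u ≤ ε₀ ^ 2 → |K u| ≤ δ * Q u := by
  obtain ⟨ε₀, hε₀, hsmall⟩ := hK δ hδ
  have hball : ∀ u ε, 0 < ε → ε ≤ ε₀ → Q u ≤ ε ^ 2 → |K u| ≤ δ * ε ^ 2 := by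
    intro u ε hε hεε₀ hu
    have hv : Q (ε⁻¹ • u) ≤ 1 := by
      rw [hQ, inv_pow, inv_mul_le_one₀ (by positivity)]
      exact hu
    simpa [smul_smul, hε.ne'] using hsmall ε (ε⁻¹ • u) hε hεε₀ hv
  refine ⟨ε₀, hε₀, fun u hu => ?_⟩
  rcases (hQnn u).eq_or_lt with hQu | hQu
  · have hlim : Tendsto (fun ε : ℝ => δ * ε ^ 2) (𝓝[>] 0) (𝓝 (δ * Q u)) := by
      have := ((by fun_prop : Continuous fun ε : ℝ => δ * ε ^ 2).tendsto 0).mono_left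
        (nhdsWithin_le_nhds (s := Set.Ioi 0))
      simpa [← hQu] using this
    refine ge_of_tendsto hlim ?_
    filter_upwards [Ioc_mem_nhdsGT hε₀] with ε hε
    exact hball u ε hε.1 hε.2 (hQu ▸ by positivity)
  · have hsqrt : √(Q u) ≤ ε₀ := (Real.sqrt_le_sqrt hu).trans_eq (Real.sqrt_sq hε₀.le)
    simpa [Real.sq_sqrt hQu.le] using
      hball u (√(Q u)) (Real.sqrt_pos.2 hQu) hsqrt (Real.sq_sqrt hQu.le).ge

theorem IsSuperquadratic.tendsto_div_sq (hQnn : ∀ u, 0 ≤ Q u)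
    (hQ : ∀ (c : ℝ) (u : X), Q (c • u) = c ^ 2 * Q u) (hK : IsSuperquadratic Q K) (u : X) :
    Tendsto (fun t : ℝ => K (t • u) / t ^ 2) (𝓝[>] 0) (𝓝 0) := by
  have hQu : 0 < Q u + 1 := by linarith [hQnn u]
  rw [← Asymptotics.isLittleO_const_iff hQu.ne', Asymptotics.isLittleO_iff]
  intro δ hδ
  obtain ⟨ε₀, hε₀, hbound⟩ := hK.abs_le_mul hQnn hQ hδ
  have hball : ∀ᶠ t in 𝓝[>] (0 : ℝ), t ^ 2 * Q u < ε₀ ^ 2 := by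
    have : Tendsto (fun t : ℝ => t ^ 2 * Q u) (𝓝 0) (𝓝 0) := by
      simpa using (by fun_prop : Continuous fun t : ℝ => t ^ 2 * Q u).tendsto 0
    exact (this.mono_left nhdsWithin_le_nhds).eventually (gt_mem_nhds (by positivity))
  filter_upwards [hball, self_mem_nhdsWithin] with t ht (htpos : 0 < t)
  have hKt := hbound (t • u) (by rw [hQ]; exact ht.le)
  rw [hQ] at hKt
  rw [Real.norm_eq_abs, Real.norm_eq_abs, abs_div, abs_of_pos (by positivity : 0 < t ^ 2),
    abs_of_pos hQu, div_le_iff₀ (by positivity)]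
  nlinarith [mul_le_mul_of_nonneg_left (le_add_of_nonneg_right zero_le_one : Q u ≤ Q u + 1)
    (by positivity : 0 ≤ δ * t ^ 2)]

end

section

variable {X : Type*} [AddCommGroup X] [Module ℝ X] {QL QL0 K K0 : X → ℝ}

theorem smallBallRatioInf_le (hQLnn : ∀ u, 0 ≤ QL u)
    (hQLhom : ∀ (c : ℝ) (u : X), QL (c • u) = c ^ 2 * QL u)
    (hQL0hom : ∀ (c : ℝ) (u : X), QL0 (c • u) = c ^ 2 * QL0 u)
    (hK : IsSuperquadratic QL K) (hK0 : IsSuperquadratic QL K0) {ε : ℝ} (hε : 0 < ε)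
    {u : X} (hu : QL0 u ≠ 0) :
    smallBallRatioInf QL QL0 K K0 ε ≤ ((QL u / 2 / |QL0 u| : ℝ) : EReal) := by
  have hden : Tendsto (fun t => |QL0 u + K0 (t • u) / t ^ 2|) (𝓝[>] 0) (𝓝 |QL0 u|) := by
    simpa using (tendsto_const_nhds.add (hK0.tendsto_div_sq hQLnn hQLhom u)).abs
  have hratio : Tendsto (fun t => (QL u / 2 + K (t • u) / t ^ 2) / |QL0 u + K0 (t • u) / t ^ 2|)
      (𝓝[>] 0) (𝓝 (QL u / 2 / |QL0 u|)) := by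
    have := ((tendsto_const_nhds (x := QL u / 2)).add
      (hK.tendsto_div_sq hQLnn hQLhom u)).div hden (abs_ne_zero.2 hu)
    rwa [add_zero] at this
  have hball : ∀ᶠ t in 𝓝[>] (0 : ℝ), t ^ 2 * QL u < ε ^ 2 := by
    have : Tendsto (fun t : ℝ => t ^ 2 * QL u) (𝓝 0) (𝓝 0) := by
      simpa using (by fun_prop : Continuous fun t : ℝ => t ^ 2 * QL u).tendsto 0
    exact (this.mono_left nhdsWithin_le_nhds).eventually (gt_mem_nhds (by positivity))
  refine ge_of_tendsto (EReal.tendsto_coe.2 hratio) ?_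
  filter_upwards [hball, hden.eventually (lt_mem_nhds (abs_pos.2 hu)), self_mem_nhdsWithin]
    with t hQt hCt (ht : 0 < t)
  have hscale : ∀ p y : ℝ, t ^ 2 * p + y = t ^ 2 * (p + y / t ^ 2) := fun p y => by field_simp
  have ht2 : 0 < t ^ 2 := by positivity
  refine sInf_le ⟨t • u, by rw [hQLhom]; exact hQt.le, ?_, ?_⟩
  · rw [hQL0hom, hscale, abs_mul]
    positivity
  · rw [hQLhom, hQL0hom, mul_div_assoc, hscale, hscale, abs_mul, abs_of_pos ht2,
      mul_div_mul_left _ _ ht2.ne']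

theorem le_iSup_smallBallRatioInf (hQLnn : ∀ u, 0 ≤ QL u)
    (hQLhom : ∀ (c : ℝ) (u : X), QL (c • u) = c ^ 2 * QL u)
    (hK : IsSuperquadratic QL K) (hK0 : IsSuperquadratic QL K0) {a : ℝ} (ha : 0 ≤ a)
    (hbound : ∀ u, a * |QL0 u| ≤ QL u / 2) :
    (a : EReal) ≤ ⨆ (ε : ℝ) (_ : 0 < ε), smallBallRatioInf QL QL0 K K0 ε := by
  have hlower : ∀ δ : ℝ, 0 < δ → δ ≤ 1 / 2 → ((a * (1 - 2 * δ) / (1 + 2 * a * δ) : ℝ) : EReal) ≤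
      ⨆ (ε : ℝ) (_ : 0 < ε), smallBallRatioInf QL QL0 K K0 ε := by
    intro δ hδ hδ'
    obtain ⟨ε₀, hε₀, hKb⟩ := hK.abs_le_mul hQLnn hQLhom hδ
    obtain ⟨ε₁, hε₁, hK0b⟩ := hK0.abs_le_mul hQLnn hQLhom hδ
    refine le_trans (le_sInf ?_) (le_iSup₂ (f := fun ε (_ : 0 < ε) =>
      smallBallRatioInf QL QL0 K K0 ε) (min ε₀ ε₁) (lt_min hε₀ hε₁))
    rintro _ ⟨u, hu, hC, rfl⟩
    have hmin := le_min hε₀.le hε₁.le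
    have hu₀ : QL u ≤ ε₀ ^ 2 := hu.trans (pow_le_pow_left₀ hmin (min_le_left _ _) 2)
    have hu₁ : QL u ≤ ε₁ ^ 2 := hu.trans (pow_le_pow_left₀ hmin (min_le_right _ _) 2)
    rw [EReal.coe_le_coe_iff, le_div_iff₀ hC]
    exact mul_abs_add_le_half_add ha hδ.le hδ' (hbound u) (hKb u hu₀) (hK0b u hu₁)
  have hlim : Tendsto (fun δ : ℝ => ((a * (1 - 2 * δ) / (1 + 2 * a * δ) : ℝ) : EReal))
      (𝓝[>] 0) (𝓝 a) := by
    have : ContinuousAt (fun δ : ℝ => a * (1 - 2 * δ) / (1 + 2 * a * δ)) 0 :=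
      ContinuousAt.div (by fun_prop) (by fun_prop) (by simp)
    exact EReal.tendsto_coe.2 (by simpa using this.tendsto.mono_left nhdsWithin_le_nhds)
  refine le_of_tendsto hlim ?_
  filter_upwards [Ioc_mem_nhdsGT one_half_pos] with δ hδ using hlower δ hδ.1 hδ.2

end

/-- Proposition `laida`: with `E_Q(u) = ½⟨Lu,u⟩_Q + K_Q(u)` and
`C_Q(u) = ⟨L₀u,u⟩_Q + K_{0,Q}(u)`, where the quadratic parts `QL u = ⟨Lu,u⟩_Q = ‖u‖_Q²`
and `QL0 u = ⟨L₀u,u⟩_Q` are 2-homogeneous, `QL ≥ 0`, and the remainders `K`, `K₀` are of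
higher than quadratic order at `0`, uniformly on `‖v‖_Q ≤ 1`, one has
`e₀ := lim_{ε→0} inf { E_Q(u)/|C_Q(u)| : ‖u‖_Q ≤ ε, |C_Q(u)| > 0 }
     = inf_{u ≠ 0} (½⟨Lu,u⟩_Q)/|⟨L₀u,u⟩_Q|`. -/
theorem stmt4 {X : Type*} [NormedAddCommGroup X] [NormedSpace ℝ X]
    (QL QL0 K K0 : X → ℝ)
    (hQLnn : ∀ u, 0 ≤ QL u)
    (hQLhom : ∀ (c : ℝ) (u : X), QL (c • u) = c ^ 2 * QL u)
    (hQL0hom : ∀ (c : ℝ) (u : X), QL0 (c • u) = c ^ 2 * QL0 u)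
    (hsmall : ∀ δ : ℝ, 0 < δ → ∃ ε₀ : ℝ, 0 < ε₀ ∧ ∀ (ε : ℝ) (v : X),
      0 < ε → ε ≤ ε₀ → QL v ≤ 1 →
        |K (ε • v)| ≤ δ * ε ^ 2 ∧ |K0 (ε • v)| ≤ δ * ε ^ 2) :
    (⨆ (ε : ℝ) (_ : 0 < ε),
        sInf {r : EReal | ∃ u : X, QL u ≤ ε ^ 2 ∧
          0 < |QL0 u + K0 u| ∧
          r = (((QL u / 2 + K u) / |QL0 u + K0 u| : ℝ) : EReal)})
      = sInf {r : EReal | ∃ u : X, QL0 u ≠ 0 ∧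
          r = ((QL u / 2 / |QL0 u| : ℝ) : EReal)} := by
  have hK : IsSuperquadratic QL K := fun δ hδ =>
    (hsmall δ hδ).imp fun _ h => ⟨h.1, fun ε v h₁ h₂ h₃ => (h.2 ε v h₁ h₂ h₃).1⟩
  have hK0 : IsSuperquadratic QL K0 := fun δ hδ =>
    (hsmall δ hδ).imp fun _ h => ⟨h.1, fun ε v h₁ h₂ h₃ => (h.2 ε v h₁ h₂ h₃).2⟩
  change ⨆ (ε : ℝ) (_ : 0 < ε), smallBallRatioInf QL QL0 K K0 ε = quadraticRatioInf QL QL0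
  refine le_antisymm (iSup₂_le fun ε hε => le_sInf ?_)
    (EReal.ge_of_forall_gt_iff_ge.1 fun c hc => ?_)
  · rintro _ ⟨u, hu, rfl⟩
    exact smallBallRatioInf_le hQLnn hQLhom hQL0hom hK hK0 hε hu
  rcases le_or_gt c 0 with hc0 | hc0
  · exact (EReal.coe_le_coe_iff.2 hc0).trans
      (le_iSup_smallBallRatioInf hQLnn hQLhom hK hK0 le_rfl
        fun u => by rw [zero_mul]; linarith [hQLnn u])
  · exact le_iSup_smallBallRatioInf hQLnn hQLhom hK hK0 hc0.le
      (mul_abs_le_half_of_coe_le_quadraticRatioInf hQLnn hc.le)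
end

section
/- (Splitting property.) Let X be a Hilbert space and K : X → ℝ a C¹ functional defined via local densities K_Ω. Assume: (local compactness) if uₙ ⇀ ū weakly in X then K_Ω(uₙ) → K_Ω(ū) for every bounded Ω ⊂ ℝ^N; (boundedness) if ‖u‖ ≤ M then K′_Ω(u) is bounded in X′(Ω) uniformly in Ω; and for each u ∈ X and ε > 0 there is R with |K_{B_R^c}(u)| < ε and ‖u‖_{B_R^c} < ε. Then for every u ∈ X and every sequence wₙ ⇀ 0 weakly in X, K(u + wₙ) − K(u) − K(wₙ) → 0. -/
open Filter Topology

/-! On a large ball `Ω = B_R` the local compactness of `K_Ω` turns the weak convergence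
`wₙ ⇀ 0` into `K_Ω(u + wₙ) - K_Ω(u) - K_Ω(wₙ) → 0`. On the complement, the mean value
theorem along `t ↦ wₙ + t u` bounds `K_{Ωᶜ}(u + wₙ) - K_{Ωᶜ}(wₙ)` by `M' ‖u‖_{Ωᶜ}`, where `M'`
bounds the derivative on a ball containing the (bounded, by Banach–Steinhaus) sequence `wₙ`;
together with `|K_{Ωᶜ}(u)|` this is small once `R` is large. -/

theorem exists_norm_le_of_tendsto_inner_zero {𝕜 E : Type*} [RCLike 𝕜] [NormedAddCommGroup E]
    [InnerProductSpace 𝕜 E] [CompleteSpace E] {w : ℕ → E}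
    (hw : ∀ v : E, Tendsto (fun n => inner 𝕜 v (w n)) atTop (𝓝 0)) :
    ∃ C, ∀ n, ‖w n‖ ≤ C := by
  obtain ⟨C, hC⟩ := banach_steinhaus (g := fun n => innerSL 𝕜 (w n)) fun v => by
    obtain ⟨c, hc⟩ := (hw v).norm.bddAbove_range
    exact ⟨c, fun n => by
      rw [innerSL_apply_apply, norm_inner_symm]; exact hc (Set.mem_range_self n)⟩
  exact ⟨C, fun n => by simpa only [innerSL_apply_norm] using hC n⟩

theorem norm_sub_le_of_norm_fderiv_apply_le {E F : Type*} [NormedAddCommGroup E]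
    [NormedSpace ℝ E] [NormedAddCommGroup F] [NormedSpace ℝ F] {f : E → F}
    {f' : E → E →L[ℝ] F} (hf : ∀ x, HasFDerivAt f (f' x) x) (a h : E) {C : ℝ}
    (hC : ∀ t ∈ Set.Icc (0 : ℝ) 1, ‖f' (a + t • h) h‖ ≤ C) :
    ‖f (a + h) - f a‖ ≤ C := by
  have hline : ∀ t : ℝ, HasDerivAt (fun t : ℝ => a + t • h) h t := fun t => by
    simpa using ((hasDerivAt_id t).smul_const h).const_add a
  have := norm_image_sub_le_of_norm_deriv_le_segment_01' (f := fun t : ℝ => f (a + t • h))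
    (fun t _ => ((hf _).comp_hasDerivAt t (hline t)).hasDerivWithinAt)
    (fun t ht => hC t (Set.Ico_subset_Icc_self ht))
  simpa using this

theorem abs_add_sub_sub_le_of_abs_fderiv_apply_le {E : Type*} [NormedAddCommGroup E]
    [NormedSpace ℝ E] {g : E → ℝ} {g' : E → E →L[ℝ] ℝ} (hg : ∀ x, HasFDerivAt g (g' x) x)
    {u w : E} {M c : ℝ} (hbound : ∀ x, ‖x‖ ≤ M → |g' x u| ≤ c) (hM : ‖u‖ + ‖w‖ ≤ M) :
    |g (u + w) - g u - g w| ≤ c + |g u| := by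
  have hmvt : |g (w + u) - g w| ≤ c :=
    norm_sub_le_of_norm_fderiv_apply_le hg w u fun t ht => hbound _ <| by
      calc ‖w + t • u‖ ≤ ‖w‖ + |t| * ‖u‖ := by
            simpa only [norm_smul, Real.norm_eq_abs] using norm_add_le w (t • u)
        _ ≤ ‖w‖ + 1 * ‖u‖ := by
            gcongr; rw [abs_of_nonneg ht.1]; exact ht.2
        _ ≤ M := by linarith
  calc |g (u + w) - g u - g w| = |(g (w + u) - g w) + -g u| := by rw [add_comm u w]; ring_nf
    _ ≤ |g (w + u) - g w| + |g u| := by simpa only [abs_neg] using abs_add_le _ (-g u)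
    _ ≤ c + |g u| := by gcongr

theorem tendsto_add_sub_sub_of_weakly_null {E : Type*} [NormedAddCommGroup E]
    [InnerProductSpace ℝ E] {g : E → ℝ}
    (hg : ∀ (v : ℕ → E) (vbar : E),
      (∀ z : E, Tendsto (fun n => inner ℝ z (v n - vbar)) atTop (𝓝 0)) →
        Tendsto (fun n => g (v n)) atTop (𝓝 (g vbar)))
    (hg0 : g 0 = 0) (u : E) {w : ℕ → E}
    (hw : ∀ v : E, Tendsto (fun n => inner ℝ v (w n)) atTop (𝓝 0)) :
    Tendsto (fun n => g (u + w n) - g u - g (w n)) atTop (𝓝 0) := by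
  have hshift := hg (fun n => u + w n) u fun z => by simpa using hw z
  have hnull := hg w 0 fun z => by simpa using hw z
  rw [hg0] at hnull
  simpa using (hshift.sub_const (g u)).sub hnull

theorem tendsto_zero_of_forall_exists_tendsto_zero_norm_sub_le {ι E : Type*}
    [SeminormedAddCommGroup E] {l : Filter ι} {a : ι → E}
    (h : ∀ ε > 0, ∃ b : ι → E, Tendsto b l (𝓝 0) ∧ ∀ i, ‖a i - b i‖ ≤ ε) :
    Tendsto a l (𝓝 0) := by
  rw [Metric.tendsto_nhds]
  intro ε hε
  obtain ⟨b, hb, hab⟩ := h (ε / 2) (half_pos hε)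
  filter_upwards [Metric.tendsto_nhds.mp hb (ε / 2) (half_pos hε)] with i hi
  rw [dist_zero_right] at hi ⊢
  calc ‖a i‖ ≤ ‖a i - b i‖ + ‖b i‖ := norm_le_norm_sub_add _ _
    _ < ε / 2 + ε / 2 := add_lt_add_of_le_of_lt (hab i) hi
    _ = ε := add_halves ε

theorem stmt6_general {X : Type*} [NormedAddCommGroup X] [InnerProductSpace ℝ X]
    [CompleteSpace X] (N : ℕ)
    (K : X → ℝ)
    (KO : Set (EuclideanSpace ℝ (Fin N)) → X → ℝ)
    (normO : Set (EuclideanSpace ℝ (Fin N)) → X → ℝ)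
    (D : Set (EuclideanSpace ℝ (Fin N)) → X → X →L[ℝ] ℝ)
    (hKuniv : ∀ u, K u = KO Set.univ u)
    (hKsplit : ∀ (Ω : Set (EuclideanSpace ℝ (Fin N))) (u : X),
      KO Set.univ u = KO Ω u + KO Ωᶜ u)
    (hK0 : ∀ Ω, KO Ω 0 = 0)
    (hlc : ∀ (v : ℕ → X) (vbar : X),
      (∀ z : X, Tendsto (fun n => (inner ℝ z (v n - vbar) : ℝ)) atTop (nhds 0)) →
      ∀ Ω : Set (EuclideanSpace ℝ (Fin N)), Bornology.IsBounded Ω →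
        Tendsto (fun n => KO Ω (v n)) atTop (nhds (KO Ω vbar)))
    (hderiv : ∀ Ω u, HasFDerivAt (KO Ω) (D Ω u) u)
    (hbound : ∀ M : ℝ, 0 < M → ∃ M' : ℝ, 0 < M' ∧ ∀ Ω (u h : X),
      ‖u‖ ≤ M → |D Ω u h| ≤ M' * normO Ω h)
    (htail : ∀ (u : X) (ε : ℝ), 0 < ε → ∃ R : ℝ, 0 < R ∧
      |KO (Metric.ball (0 : EuclideanSpace ℝ (Fin N)) R)ᶜ u| < ε ∧
      normO (Metric.ball (0 : EuclideanSpace ℝ (Fin N)) R)ᶜ u < ε)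
    (u : X) (w : ℕ → X)
    (hw : ∀ v : X, Tendsto (fun n => (inner ℝ v (w n) : ℝ)) atTop (nhds 0)) :
    Tendsto (fun n => K (u + w n) - K u - K (w n)) atTop (nhds 0) := by
  obtain ⟨C, hC⟩ := exists_norm_le_of_tendsto_inner_zero hw
  have hC0 : 0 ≤ C := (norm_nonneg _).trans (hC 0)
  obtain ⟨M', hM'pos, hM'⟩ := hbound (‖u‖ + C + 1) (by positivity)
  refine tendsto_zero_of_forall_exists_tendsto_zero_norm_sub_le fun ε hε => ?_
  obtain ⟨R, -, hKR, hnR⟩ := htail u (ε / (M' + 1)) (by positivity)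
  set Ω := Metric.ball (0 : EuclideanSpace ℝ (Fin N)) R
  refine ⟨fun n => KO Ω (u + w n) - KO Ω u - KO Ω (w n),
    tendsto_add_sub_sub_of_weakly_null (hlc · · · Ω Metric.isBounded_ball) (hK0 Ω) u hw,
    fun n => ?_⟩
  have hsplit : K (u + w n) - K u - K (w n) - (KO Ω (u + w n) - KO Ω u - KO Ω (w n))
      = KO Ωᶜ (u + w n) - KO Ωᶜ u - KO Ωᶜ (w n) := by
    rw [hKuniv, hKuniv, hKuniv, hKsplit Ω (u + w n), hKsplit Ω u, hKsplit Ω (w n)]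
    ring
  have htailn := abs_add_sub_sub_le_of_abs_fderiv_apply_le (hderiv Ωᶜ)
    (fun x hx => hM' Ωᶜ x u hx) (by linarith [hC n] : ‖u‖ + ‖w n‖ ≤ ‖u‖ + C + 1)
  rw [Real.norm_eq_abs, hsplit]
  calc _ ≤ M' * normO Ωᶜ u + |KO Ωᶜ u| := htailn
    _ ≤ M' * (ε / (M' + 1)) + ε / (M' + 1) := by gcongr
    _ = ε := by field_simp

/-- splitting property, Lemma `sp` for the superquadratic part `K`.
`X` is a Hilbert space; `K` is defined through local densities: `KO Ω u` is the part of
`K u` coming from `Ω ⊆ ℝ^N` (`K = KO univ`, and `KO` splits along `Ω`, `Ωᶜ`), with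
`KO Ω 0 = 0`. Assume local compactness (weak convergence improves `KO Ω` to convergence
on bounded `Ω`), that `KO Ω` is `C¹` with derivative bounded in `X′(Ω)` (i.e. by the
localized norm `normO Ω`) uniformly on bounded sets of `X` and in `Ω`, and smallness of
the tails `|K_{B_R^c}(u)|`, `‖u‖_{B_R^c}`. Then for `wₙ ⇀ 0` weakly,
`K(u + wₙ) − K(u) − K(wₙ) → 0`. -/
theorem stmt6 {X : Type*} [NormedAddCommGroup X] [InnerProductSpace ℝ X]
    [CompleteSpace X] (N : ℕ)
    (K : X → ℝ)
    (KO : Set (EuclideanSpace ℝ (Fin N)) → X → ℝ)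
    (normO : Set (EuclideanSpace ℝ (Fin N)) → X → ℝ)
    (D : Set (EuclideanSpace ℝ (Fin N)) → X → X →L[ℝ] ℝ)
    (hKuniv : ∀ u, K u = KO Set.univ u)
    (hKsplit : ∀ (Ω : Set (EuclideanSpace ℝ (Fin N))) (u : X),
      KO Set.univ u = KO Ω u + KO Ωᶜ u)
    (hK0 : ∀ Ω, KO Ω 0 = 0)
    (hlc : ∀ (v : ℕ → X) (vbar : X),
      (∀ z : X, Tendsto (fun n => (inner ℝ z (v n - vbar) : ℝ)) atTop (nhds 0)) →
      ∀ Ω : Set (EuclideanSpace ℝ (Fin N)), Bornology.IsBounded Ω →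
        Tendsto (fun n => KO Ω (v n)) atTop (nhds (KO Ω vbar)))
    (hderiv : ∀ Ω u, HasFDerivAt (KO Ω) (D Ω u) u)
    (hbound : ∀ M : ℝ, 0 < M → ∃ M' : ℝ, 0 < M' ∧ ∀ Ω (u h : X),
      ‖u‖ ≤ M → |D Ω u h| ≤ M' * normO Ω h)
    (htail : ∀ (u : X) (ε : ℝ), 0 < ε → ∃ R : ℝ, 0 < R ∧
      |KO (Metric.ball (0 : EuclideanSpace ℝ (Fin N)) R)ᶜ u| < ε ∧
      normO (Metric.ball (0 : EuclideanSpace ℝ (Fin N)) R)ᶜ u < ε)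
    (hnormnn : ∀ Ω u, 0 ≤ normO Ω u)
    (u : X) (w : ℕ → X)
    (hw : ∀ v : X, Tendsto (fun n => (inner ℝ v (w n) : ℝ)) atTop (nhds 0)) :
    Tendsto (fun n => K (u + w n) - K u - K (w n)) atTop (nhds 0) :=
  stmt6_general N K KO normO D hKuniv hKsplit hK0 hlc hderiv hbound htail u w hw
end

section
/- Suppose E : X → ℝ satisfies: ‖uₙ‖ → ∞ implies E(uₙ) → ∞ (coercivity), and |C(uₙ)| → ∞ implies ‖uₙ‖ → ∞ along a subsequence (from boundedness assumption E−4/E−2). Then σ·Λ_σ → ∞ as σ → ∞, where Λ_σ is the constrained infimum of E(u)/|C(u)| near |C(u)| = σ. -/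
/-! Along any sequence with `|C uₙ| → ∞` some subsequence has `‖uₙ‖ → ∞`, so by coercivity
`E uₙ` is unbounded on it; hence `E ≥ M` as soon as `|C| ≥ R(M)`. For `σ ≥ R + 1`, every `u`
admissible at `ε = 1` then has `E u / |C u| ≥ M / (σ + 1)`, so `σ Λ_σ ≥ σ M / (σ + 1) ≥ M / 2`. -/

open Filter

/-- `Λ_σ = lim_{ε→0} inf { E(u)/|C(u)| : σ - ε ≤ |C(u)| ≤ σ + ε }`. -/
noncomputable def Lam {X : Type*} (E C : X → ℝ) (σ : ℝ) : EReal :=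
  ⨆ (ε : ℝ) (_ : 0 < ε),
    sInf {r : EReal | ∃ u : X, σ - ε ≤ |C u| ∧ |C u| ≤ σ + ε ∧ 0 < |C u| ∧
      r = ((E u / |C u| : ℝ) : EReal)}

theorem exists_forall_le_of_le_abs {X : Type*} [Norm X] (E C : X → ℝ)
    (hcoer : ∀ u : ℕ → X,
      Tendsto (fun n => ‖u n‖) atTop atTop → Tendsto (fun n => E (u n)) atTop atTop)
    (hCn : ∀ u : ℕ → X, Tendsto (fun n => |C (u n)|) atTop atTop →
      ∃ φ : ℕ → ℕ, StrictMono φ ∧ Tendsto (fun n => ‖u (φ n)‖) atTop atTop)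
    (M : ℝ) : ∃ R : ℝ, ∀ u : X, R ≤ |C u| → M ≤ E u := by
  by_contra! h
  choose u hCu hEu using fun n : ℕ => h n
  have hC : Tendsto (fun n => |C (u n)|) atTop atTop :=
    tendsto_atTop_mono hCu tendsto_natCast_atTop_atTop
  obtain ⟨φ, -, hnorm⟩ := hCn u hC
  obtain ⟨n, hn⟩ := ((hcoer _ hnorm).eventually_ge_atTop M).exists
  exact (hEu (φ n)).not_ge hn

theorem coe_div_le_Lam {X : Type*} (E C : X → ℝ) {σ ε M : ℝ} (hε : 0 < ε) (hM : 0 ≤ M)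
    (hE : ∀ u, σ - ε ≤ |C u| → M ≤ E u) :
    ((M / (σ + ε) : ℝ) : EReal) ≤ Lam E C σ := by
  unfold Lam
  refine le_iSup₂_of_le ε hε (le_sInf ?_)
  rintro r ⟨u, hlo, hhi, hpos, rfl⟩
  have hEu := hE u hlo
  exact EReal.coe_le_coe_iff.2 (div_le_div₀ (hM.trans hEu) hEu hpos hhi)

theorem stmt9_general {X : Type*} [NormedAddCommGroup X] (E C : X → ℝ)
    (hcoer : ∀ u : ℕ → X,
      Tendsto (fun n => ‖u n‖) atTop atTop → Tendsto (fun n => E (u n)) atTop atTop)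
    (hCn : ∀ u : ℕ → X, Tendsto (fun n => |C (u n)|) atTop atTop →
      ∃ φ : ℕ → ℕ, StrictMono φ ∧ Tendsto (fun n => ‖u (φ n)‖) atTop atTop) :
    Tendsto (fun σ : ℝ => (σ : EReal) * Lam E C σ) atTop (nhds ⊤) := by
  rw [EReal.tendsto_nhds_top_iff_real]
  intro x
  set M : ℝ := 2 * |x| + 2
  obtain ⟨R, hR⟩ := exists_forall_le_of_le_abs E C hcoer hCn M
  filter_upwards [eventually_ge_atTop (max (R + 1) 1)] with σ hσ
  have hσ1 : 1 ≤ σ := le_of_max_le_right hσ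
  have hLam : ((M / (σ + 1) : ℝ) : EReal) ≤ Lam E C σ :=
    coe_div_le_Lam E C one_pos (by positivity) fun u hu =>
      hR u (by linarith [le_of_max_le_left hσ])
  have hhalf : M / 2 ≤ σ * (M / (σ + 1)) := by
    rw [mul_div_assoc', div_le_div_iff₀ two_pos (by linarith)]
    nlinarith [abs_nonneg x]
  calc (x : EReal) < ((σ * (M / (σ + 1)) : ℝ) : EReal) :=
        EReal.coe_lt_coe_iff.2 (by linarith [le_abs_self x])
    _ = (σ : EReal) * ((M / (σ + 1) : ℝ) : EReal) := EReal.coe_mul _ _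
    _ ≤ (σ : EReal) * Lam E C σ :=
        mul_le_mul_of_nonneg_left hLam (EReal.coe_nonneg.2 (by linarith))

/-- Remark `figo`: hypothesis (ei) implies (beg): if `E` is coercive
(`‖uₙ‖ → ∞ ⟹ E(uₙ) → ∞`) and `|C(uₙ)| → ∞` forces `‖uₙ‖ → ∞` along a
subsequence, then `σ·Λ_σ → ∞` as `σ → ∞`. -/
theorem stmt9 {X : Type*} [NormedAddCommGroup X] (E C : X → ℝ)
    (hEnn : ∀ u, 0 ≤ E u)
    (hcoer : ∀ u : ℕ → X,
      Tendsto (fun n => ‖u n‖) atTop atTop → Tendsto (fun n => E (u n)) atTop atTop)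
    (hCn : ∀ u : ℕ → X, Tendsto (fun n => |C (u n)|) atTop atTop →
      ∃ φ : ℕ → ℕ, StrictMono φ ∧ Tendsto (fun n => ‖u (φ n)‖) atTop atTop) :
    Tendsto (fun σ : ℝ => (σ : EReal) * Lam E C σ) atTop (nhds ⊤) :=
  stmt9_general E C hcoer hCn
end

section
/- (Lower bound for e₀ for NKG.) Let h : ℝ^N → ℝ measurable with h(x) ≥ h₀ > 0, and Q ⊂ ℝ^N measurable. For every pair (ψ, ψ̂) ∈ H¹(Q, ℂ) × L²(Q, ℂ) with Re ∫_Q i ψ̂ ψ̄ dx ≠ 0: (½∫_Q(|ψ̂|² + |∇ψ|² + h(x)²|ψ|²) dx) / |Re ∫_Q i ψ̂ ψ̄ dx| ≥ h₀. In particular e₀ ≥ h₀. -/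
open MeasureTheory

/-! Pointwise, `|Re (i ψ̂ ψ̄)| ≤ |ψ̂| |ψ|` and, by AM–GM,
`h₀ |ψ̂| |ψ| ≤ ½ (|ψ̂|² + h₀² |ψ|²) ≤ ½ (|ψ̂|² + |∇ψ|² + h² |ψ|²)`;
integrating this bound gives `h₀ |Re ∫ i ψ̂ ψ̄| ≤ ½ ∫ (|ψ̂|² + |∇ψ|² + h² |ψ|²)`. -/

lemma Complex.abs_re_I_mul_mul_conj_le (z w : ℂ) :
    |(Complex.I * z * starRingEnd ℂ w).re| ≤ ‖z‖ * ‖w‖ := by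
  calc |(Complex.I * z * starRingEnd ℂ w).re|
      ≤ ‖Complex.I * z * starRingEnd ℂ w‖ := Complex.abs_re_le_norm _
    _ = ‖z‖ * ‖w‖ := by rw [norm_mul, norm_mul, Complex.norm_I, one_mul, RCLike.norm_conj]

lemma Complex.mul_abs_re_I_mul_mul_conj_le {c t : ℝ} (hc : 0 ≤ c) (hct : c ≤ t)
    (z w : ℂ) (d : ℝ) :
    c * |(Complex.I * z * starRingEnd ℂ w).re| ≤ 1 / 2 * (‖z‖ ^ 2 + d ^ 2 + t ^ 2 * ‖w‖ ^ 2) := by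
  have hsq : c ^ 2 * ‖w‖ ^ 2 ≤ t ^ 2 * ‖w‖ ^ 2 := by gcongr
  calc c * |(Complex.I * z * starRingEnd ℂ w).re| ≤ c * (‖z‖ * ‖w‖) := by
        gcongr; exact Complex.abs_re_I_mul_mul_conj_le z w
    _ ≤ 1 / 2 * (‖z‖ ^ 2 + d ^ 2 + t ^ 2 * ‖w‖ ^ 2) := by
        nlinarith [sq_nonneg (‖z‖ - c * ‖w‖), sq_nonneg d]

lemma mul_abs_integral_le_integral {α : Type*} [MeasurableSpace α] {μ : Measure α}
    {f g : α → ℝ} {c : ℝ} (hc : 0 ≤ c) (hg : Integrable g μ) (hfg : ∀ x, c * |f x| ≤ g x) :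
    c * |∫ x, f x ∂μ| ≤ ∫ x, g x ∂μ :=
  calc c * |∫ x, f x ∂μ| ≤ c * ∫ x, |f x| ∂μ := by gcongr; exact abs_integral_le_integral_abs
    _ = ∫ x, c * |f x| ∂μ := (integral_const_mul c _).symm
    _ ≤ ∫ x, g x ∂μ :=
        integral_mono_of_nonneg (ae_of_all _ fun x => by positivity) hg (ae_of_all _ hfg)

theorem stmt13_general (N : ℕ) (Q : Set (EuclideanSpace ℝ (Fin N)))
    (h : EuclideanSpace ℝ (Fin N) → ℝ) (h0 : ℝ) (hh0 : 0 < h0) (hh : ∀ x, h0 ≤ h x)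
    (ψ ψh : EuclideanSpace ℝ (Fin N) → ℂ)
    (h1 : IntegrableOn (fun x => ‖ψh x‖ ^ 2) Q)
    (h2 : IntegrableOn (fun x => ‖fderiv ℝ ψ x‖ ^ 2) Q)
    (h3 : IntegrableOn (fun x => (h x) ^ 2 * ‖ψ x‖ ^ 2) Q)
    (hne : (∫ x in Q, (Complex.I * ψh x * (starRingEnd ℂ) (ψ x)).re) ≠ 0) :
    h0 ≤ (1 / 2 * ∫ x in Q, (‖ψh x‖ ^ 2 + ‖fderiv ℝ ψ x‖ ^ 2 + (h x) ^ 2 * ‖ψ x‖ ^ 2))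
          / |∫ x in Q, (Complex.I * ψh x * (starRingEnd ℂ) (ψ x)).re| := by
  rw [le_div_iff₀ (abs_pos.mpr hne), ← integral_const_mul]
  exact mul_abs_integral_le_integral hh0.le (((h1.add h2).add h3).const_mul _) fun x =>
    Complex.mul_abs_re_I_mul_mul_conj_le hh0.le (hh x) _ _ _

/-- first half of Lemma `ve`, lower bound for `e₀` for NKG:
if `h(x) ≥ h₀ > 0`, then for every pair `(ψ, ψ̂)` (with the relevant localized
integrability on `Q`) whose localized hylenic charge `Re ∫_Q i ψ̂ ψ̄` is nonzero,
`(½ ∫_Q (|ψ̂|² + |∇ψ|² + h(x)²|ψ|²)) / |Re ∫_Q i ψ̂ ψ̄| ≥ h₀`. -/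
theorem stmt13 (N : ℕ) (Q : Set (EuclideanSpace ℝ (Fin N))) (hQ : MeasurableSet Q)
    (h : EuclideanSpace ℝ (Fin N) → ℝ) (h0 : ℝ) (hh0 : 0 < h0) (hh : ∀ x, h0 ≤ h x)
    (ψ ψh : EuclideanSpace ℝ (Fin N) → ℂ)
    (hψm : AEStronglyMeasurable ψ (volume.restrict Q))
    (hψhm : AEStronglyMeasurable ψh (volume.restrict Q))
    (h1 : IntegrableOn (fun x => ‖ψh x‖ ^ 2) Q)
    (h2 : IntegrableOn (fun x => ‖fderiv ℝ ψ x‖ ^ 2) Q)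
    (h3 : IntegrableOn (fun x => (h x) ^ 2 * ‖ψ x‖ ^ 2) Q)
    (hne : (∫ x in Q, (Complex.I * ψh x * (starRingEnd ℂ) (ψ x)).re) ≠ 0) :
    h0 ≤ (1 / 2 * ∫ x in Q, (‖ψh x‖ ^ 2 + ‖fderiv ℝ ψ x‖ ^ 2 + (h x) ^ 2 * ‖ψ x‖ ^ 2))
          / |∫ x in Q, (Complex.I * ψh x * (starRingEnd ℂ) (ψ x)).re| :=
  stmt13_general N Q h h0 hh0 hh ψ ψh h1 h2 h3 hne
end

section
/- (Upper bound for Λ* for NKG.) Assume W : ℝ^N × ℝ⁺ → ℝ satisfies W ≥ 0 and the hylomorphy condition: there exist α, s̄ > 0 with W(x, s̄) ≤ ½α²s̄² for all x. Then Λ* := inf over (ψ, ψ̂) ∈ H¹ × L² with Re∫iψ̂ψ̄ ≠ 0 of [∫(½|ψ̂|² + ½|∇ψ|² + W(x,ψ)) dx] / |Re∫iψ̂ψ̄ dx| satisfies Λ* ≤ α. -/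
/-!
If no admissible pair exists the infimum is `sInf ∅ = 0`. Otherwise fix one, `(ψ₀, ψ̂₀)`, and
replace it on a ball `B_R` by the plateau `ψ = s̄`, `ψ̂ = -iαs̄`. Inside the ball the gradient
vanishes, the energy density is at most `α²s̄²` by hylomorphy and the charge density is `αs̄²`;
outside, energy and charge are controlled by those of `(ψ₀, ψ̂₀)`, and the jump across the sphere
is a null set. Hence the ratio is at most `(α²s̄²|B_R| + E₀) / (αs̄²|B_R| - ∫|c₀|)`, which tends
to `α` as `R → ∞`. Gluing to `(ψ₀, ψ̂₀)` rather than to `0` keeps `∫ W(x, |ψ|)` finite without any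
assumption on `W(·, 0)`.
-/

open MeasureTheory Metric Filter Topology

section Densities

variable {E : Type*}

def chargeDensity (ψ ψh : E → ℂ) (x : E) : ℝ :=
  (Complex.I * ψh x * (starRingEnd ℂ) (ψ x)).re

theorem chargeDensity_piecewise (s : Set E) [DecidablePred (· ∈ s)] (f g fh gh : E → ℂ) :
    chargeDensity (s.piecewise f g) (s.piecewise fh gh)
      = s.piecewise (chargeDensity f fh) (chargeDensity g gh) := by
  ext x
  by_cases hxs : x ∈ s <;> simp [chargeDensity, hxs]

theorem chargeDensity_const (a b : ℝ) :
    chargeDensity (E := E) (fun _ => (b : ℂ)) (fun _ => -Complex.I * a * b)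
      = fun _ => a * b ^ 2 := by
  ext x
  simp [chargeDensity]
  ring

variable [NormedAddCommGroup E] [NormedSpace ℝ E]

noncomputable def energyDensity (W : E → ℝ → ℝ) (ψ ψh : E → ℂ) (x : E) : ℝ :=
  1 / 2 * ‖ψh x‖ ^ 2 + 1 / 2 * ‖fderiv ℝ ψ x‖ ^ 2 + W x ‖ψ x‖

variable {W : E → ℝ → ℝ}

theorem energyDensity_nonneg (hW : ∀ x s, 0 ≤ s → 0 ≤ W x s) (ψ ψh : E → ℂ) (x : E) :
    0 ≤ energyDensity W ψ ψh x := by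
  unfold energyDensity
  have := hW x ‖ψ x‖ (norm_nonneg _)
  positivity

theorem energyDensity_const (a b : ℂ) :
    energyDensity W (fun _ => a) (fun _ => b) = fun x => 1 / 2 * ‖b‖ ^ 2 + W x ‖a‖ := by
  ext x
  simp [energyDensity]

theorem energyDensity_congr_of_eventuallyEq {ψ ψh φ φh : E → ℂ} {x : E} (h : ψ =ᶠ[𝓝 x] φ)
    (hh : ψh x = φh x) : energyDensity W ψ ψh x = energyDensity W φ φh x := by
  simp only [energyDensity, h.fderiv_eq, h.eq_of_nhds, hh]

theorem energyDensity_piecewise_ae_eq [MeasurableSpace E] {μ : Measure E} {s : Set E}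
    [DecidablePred (· ∈ s)] (hs : μ (frontier s) = 0) (f g fh gh : E → ℂ) :
    energyDensity W (s.piecewise f g) (s.piecewise fh gh)
      =ᵐ[μ] s.piecewise (energyDensity W f fh) (energyDensity W g gh) := by
  filter_upwards [measure_eq_zero_iff_ae_notMem.1 hs] with x hx
  by_cases hxs : x ∈ s
  · have hnhds : s ∈ 𝓝 x :=
      mem_interior_iff_mem_nhds.1 ((mem_interior_iff_notMem_frontier hxs).2 hx)
    rw [Set.piecewise_eq_of_mem _ _ _ hxs]
    exact energyDensity_congr_of_eventuallyEq
      ((Set.piecewise_eqOn s f g).eventuallyEq_of_mem hnhds) (Set.piecewise_eq_of_mem _ _ _ hxs)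
  · have hnhds : sᶜ ∈ 𝓝 x := mem_interior_iff_mem_nhds.1
      ((mem_interior_iff_notMem_frontier hxs).2 (by rwa [frontier_compl]))
    rw [Set.piecewise_eq_of_notMem _ _ _ hxs]
    exact energyDensity_congr_of_eventuallyEq
      ((Set.piecewise_eqOn_compl s f g).eventuallyEq_of_mem hnhds)
      (Set.piecewise_eq_of_notMem _ _ _ hxs)

end Densities

section Gluing

variable {E : Type*} [MeasurableSpace E] {μ : Measure E} {s : Set E} [DecidablePred (· ∈ s)]

theorem integrable_chargeDensity_piecewise_and_le_integral {f fh : E → ℂ} {c : ℝ}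
    (hc : chargeDensity f fh = fun _ => c) (hs : MeasurableSet s) (hμs : μ s ≠ ⊤)
    {ψ ψh : E → ℂ} (hC : Integrable (chargeDensity ψ ψh) μ) :
    Integrable (chargeDensity (s.piecewise f ψ) (s.piecewise fh ψh)) μ ∧
      c * (μ s).toReal - ∫ x, |chargeDensity ψ ψh x| ∂μ
        ≤ ∫ x, chargeDensity (s.piecewise f ψ) (s.piecewise fh ψh) x ∂μ := by
  have hconst : IntegrableOn (chargeDensity f fh) s μ := by
    rw [hc]; exact integrableOn_const hμs
  rw [chargeDensity_piecewise]
  refine ⟨Integrable.piecewise hs hconst hC.integrableOn, ?_⟩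
  rw [integral_piecewise hs hconst hC.integrableOn, hc, setIntegral_const, smul_eq_mul,
    mul_comm, measureReal_def]
  have htail : -∫ x, |chargeDensity ψ ψh x| ∂μ ≤ ∫ x in sᶜ, chargeDensity ψ ψh x ∂μ :=
    calc -∫ x, |chargeDensity ψ ψh x| ∂μ ≤ -∫ x in sᶜ, |chargeDensity ψ ψh x| ∂μ :=
          neg_le_neg (setIntegral_le_integral hC.abs (Eventually.of_forall fun _ => abs_nonneg _))
      _ ≤ ∫ x in sᶜ, chargeDensity ψ ψh x ∂μ := neg_le_of_abs_le (abs_integral_le_integral_abs)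
  linarith

variable [NormedAddCommGroup E] [NormedSpace ℝ E] {W : E → ℝ → ℝ}

theorem integrable_energyDensity_piecewise_and_integral_le
    (hWnn : ∀ x s, 0 ≤ s → 0 ≤ W x s) {a b : ℂ} {K : ℝ} (hWmeas : Measurable fun x => W x ‖a‖)
    (hK : ∀ x, 1 / 2 * ‖b‖ ^ 2 + W x ‖a‖ ≤ K) (hs : MeasurableSet s) (hμs : μ s ≠ ⊤)
    (hfr : μ (frontier s) = 0) {ψ ψh : E → ℂ} (hE : Integrable (energyDensity W ψ ψh) μ) :
    Integrable (energyDensity W (s.piecewise (fun _ => a) ψ) (s.piecewise (fun _ => b) ψh)) μ ∧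
      ∫ x, energyDensity W (s.piecewise (fun _ => a) ψ) (s.piecewise (fun _ => b) ψh) x ∂μ
        ≤ K * (μ s).toReal + ∫ x, energyDensity W ψ ψh x ∂μ := by
  have hae := energyDensity_piecewise_ae_eq (W := W) hfr (fun _ => a) ψ (fun _ => b) ψh
  rw [energyDensity_const] at hae
  have hconst : IntegrableOn (fun x => 1 / 2 * ‖b‖ ^ 2 + W x ‖a‖) s μ := by
    refine IntegrableOn.of_bound hμs.lt_top (measurable_const.add hWmeas).aestronglyMeasurable K
      (Eventually.of_forall fun x => ?_)
    have := hWnn x ‖a‖ (norm_nonneg _)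
    rw [Real.norm_of_nonneg (by positivity)]
    exact hK x
  refine ⟨(Integrable.piecewise hs hconst hE.integrableOn).congr hae.symm, ?_⟩
  rw [integral_congr_ae hae, integral_piecewise hs hconst hE.integrableOn]
  refine add_le_add ?_
    (setIntegral_le_integral hE (Eventually.of_forall (energyDensity_nonneg hWnn ψ ψh)))
  calc ∫ x in s, 1 / 2 * ‖b‖ ^ 2 + W x ‖a‖ ∂μ ≤ ∫ _ in s, K ∂μ :=
        setIntegral_mono_on hconst (integrableOn_const hμs) hs fun x _ => hK x
    _ = K * (μ s).toReal := by rw [setIntegral_const, smul_eq_mul, mul_comm, measureReal_def]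

end Gluing

theorem tendsto_affine_div_affine_atTop (a b : ℝ) {c : ℝ} (hc : c ≠ 0) (d : ℝ) :
    Tendsto (fun v => (a * v + b) / (c * v + d)) atTop (𝓝 (a / c)) := by
  have hinv := tendsto_inv_atTop_zero (𝕜 := ℝ)
  have := (tendsto_const_nhds (x := a) |>.add (hinv.const_mul b)).div
    (tendsto_const_nhds (x := c) |>.add (hinv.const_mul d)) (by simpa using hc)
  simp only [mul_zero, add_zero] at this
  refine this.congr' ?_
  filter_upwards [eventually_gt_atTop 0] with v hv
  simp only [Pi.div_apply]
  rw [← mul_div_mul_right _ _ hv.ne']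
  congr 1 <;> field_simp

section Ratios

variable {E : Type*} [NormedAddCommGroup E] [NormedSpace ℝ E] [MeasurableSpace E]
  {μ : Measure E} {W : E → ℝ → ℝ}

def energyChargeRatios (μ : Measure E) (W : E → ℝ → ℝ) : Set ℝ :=
  {r | ∃ ψ ψh : E → ℂ, Integrable (energyDensity W ψ ψh) μ ∧
    Integrable (chargeDensity ψ ψh) μ ∧ ∫ x, chargeDensity ψ ψh x ∂μ ≠ 0 ∧
    r = (∫ x, energyDensity W ψ ψh x ∂μ) / |∫ x, chargeDensity ψ ψh x ∂μ|}

theorem energyChargeRatios_bddBelow (hWnn : ∀ x s, 0 ≤ s → 0 ≤ W x s) :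
    BddBelow (energyChargeRatios μ W) := by
  refine ⟨0, ?_⟩
  rintro r ⟨ψ, ψh, -, -, -, rfl⟩
  exact div_nonneg (integral_nonneg (energyDensity_nonneg hWnn ψ ψh)) (abs_nonneg _)

theorem exists_mem_energyChargeRatios_le (hWnn : ∀ x s, 0 ≤ s → 0 ≤ W x s) {α sbar : ℝ}
    (hsbar : 0 ≤ sbar) (hWmeas : Measurable fun x => W x sbar)
    (hhyl : ∀ x, W x sbar ≤ 1 / 2 * α ^ 2 * sbar ^ 2) {s : Set E} (hs : MeasurableSet s)
    (hμs : μ s ≠ ⊤) (hfr : μ (frontier s) = 0) {ψ ψh : E → ℂ}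
    (hE : Integrable (energyDensity W ψ ψh) μ) (hC : Integrable (chargeDensity ψ ψh) μ)
    (hlarge : ∫ x, |chargeDensity ψ ψh x| ∂μ < α * sbar ^ 2 * (μ s).toReal) :
    ∃ r ∈ energyChargeRatios μ W, r ≤
      (α ^ 2 * sbar ^ 2 * (μ s).toReal + ∫ x, energyDensity W ψ ψh x ∂μ) /
        (α * sbar ^ 2 * (μ s).toReal - ∫ x, |chargeDensity ψ ψh x| ∂μ) := by
  classical
  have hnorm : ‖(sbar : ℂ)‖ = sbar := Complex.norm_of_nonneg hsbar
  have hK (x : E) :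
      1 / 2 * ‖-Complex.I * α * sbar‖ ^ 2 + W x ‖(sbar : ℂ)‖ ≤ α ^ 2 * sbar ^ 2 := by
    rw [hnorm, norm_mul, norm_mul, norm_neg, Complex.norm_I, Complex.norm_real, hnorm,
      Real.norm_eq_abs, one_mul, mul_pow, sq_abs]
    linarith [hhyl x]
  obtain ⟨hEint, hEle⟩ := integrable_energyDensity_piecewise_and_integral_le hWnn
    (by rwa [hnorm]) hK hs hμs hfr hE
  obtain ⟨hCint, hCge⟩ :=
    integrable_chargeDensity_piecewise_and_le_integral (chargeDensity_const α sbar) hs hμs hC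
  refine ⟨_, ⟨_, _, hEint, hCint, ?_, rfl⟩, ?_⟩
  · linarith
  · exact div_le_div₀ ((integral_nonneg (energyDensity_nonneg hWnn _ _)).trans hEle) hEle
      (by linarith) (hCge.trans (le_abs_self _))

theorem tendsto_measure_ball_toReal_atTop [FiniteDimensional ℝ E] [Nontrivial E] [BorelSpace E]
    (μ : Measure E) [μ.IsAddHaarMeasure] (x : E) :
    Tendsto (fun R => (μ (ball x R)).toReal) atTop atTop := by
  have hunit : 0 < (μ (ball (0 : E) 1)).toReal :=
    ENNReal.toReal_pos (measure_ball_pos μ 0 one_pos).ne' measure_ball_lt_top.ne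
  have hpow :=
    (tendsto_pow_atTop (Module.finrank_pos (R := ℝ) (M := E)).ne').atTop_mul_const hunit
  refine hpow.congr' ?_
  filter_upwards [eventually_ge_atTop 0] with R hR
  rw [Measure.addHaar_ball μ x hR, ENNReal.toReal_mul, ENNReal.toReal_ofReal (by positivity)]

end Ratios

theorem sInf_energyChargeRatios_le {E : Type*} [NormedAddCommGroup E] [NormedSpace ℝ E]
    [FiniteDimensional ℝ E] [Nontrivial E] [MeasurableSpace E] [BorelSpace E] (μ : Measure E)
    [μ.IsAddHaarMeasure] {W : E → ℝ → ℝ} (hWnn : ∀ x s, 0 ≤ s → 0 ≤ W x s) {α sbar : ℝ}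
    (hα : 0 < α) (hsbar : 0 < sbar) (hWmeas : Measurable fun x => W x sbar)
    (hhyl : ∀ x, W x sbar ≤ 1 / 2 * α ^ 2 * sbar ^ 2) :
    sInf (energyChargeRatios μ W) ≤ α := by
  rcases (energyChargeRatios μ W).eq_empty_or_nonempty with hempty | ⟨_, ψ, ψh, hE, hC, -⟩
  · rw [hempty, Real.sInf_empty]
    exact hα.le
  set E₀ := ∫ x, energyDensity W ψ ψh x ∂μ
  set M := ∫ x, |chargeDensity ψ ψh x| ∂μ
  have hαs : 0 < α * sbar ^ 2 := by positivity
  have hvol := tendsto_measure_ball_toReal_atTop μ (0 : E)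
  have hlim : Tendsto (fun R => (α ^ 2 * sbar ^ 2 * (μ (ball (0 : E) R)).toReal + E₀) /
      (α * sbar ^ 2 * (μ (ball (0 : E) R)).toReal - M)) atTop (𝓝 α) := by
    convert (tendsto_affine_div_affine_atTop (α ^ 2 * sbar ^ 2) E₀ hαs.ne' (-M)).comp hvol
      using 2
    · simp [sub_eq_add_neg]
    · field_simp
  refine ge_of_tendsto hlim ?_
  filter_upwards [hvol.eventually_gt_atTop (M / (α * sbar ^ 2))] with R hR
  have hfr : μ (frontier (ball (0 : E) R)) = 0 :=
    measure_mono_null frontier_ball_subset_sphere (Measure.addHaar_sphere μ 0 R)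
  obtain ⟨r, hr, hrle⟩ := exists_mem_energyChargeRatios_le hWnn hsbar.le hWmeas hhyl
    measurableSet_ball measure_ball_lt_top.ne hfr hE hC (by rwa [div_lt_iff₀' hαs] at hR)
  exact (csInf_le (energyChargeRatios_bddBelow hWnn) hr).trans hrle

theorem stmt14_general (N : ℕ) (hN : 1 ≤ N)
    (W : EuclideanSpace ℝ (Fin N) → ℝ → ℝ)
    (hWmeas : Measurable (Function.uncurry W))
    (hWnn : ∀ x s, 0 ≤ s → 0 ≤ W x s)
    (α sbar : ℝ) (hα : 0 < α) (hsbar : 0 < sbar)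
    (hhyl : ∀ x, W x sbar ≤ 1 / 2 * α ^ 2 * sbar ^ 2) :
    sInf {r : ℝ | ∃ ψ ψh : EuclideanSpace ℝ (Fin N) → ℂ,
      Integrable (fun x =>
        1 / 2 * ‖ψh x‖ ^ 2 + 1 / 2 * ‖fderiv ℝ ψ x‖ ^ 2 + W x ‖ψ x‖) ∧
      Integrable (fun x => (Complex.I * ψh x * (starRingEnd ℂ) (ψ x)).re) ∧
      (∫ x, (Complex.I * ψh x * (starRingEnd ℂ) (ψ x)).re) ≠ 0 ∧
      r = (∫ x, (1 / 2 * ‖ψh x‖ ^ 2 + 1 / 2 * ‖fderiv ℝ ψ x‖ ^ 2 + W x ‖ψ x‖)) /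
            |∫ x, (Complex.I * ψh x * (starRingEnd ℂ) (ψ x)).re|}
      ≤ α := by
  have : Nonempty (Fin N) := ⟨⟨0, hN⟩⟩
  exact sInf_energyChargeRatios_le volume hWnn hα hsbar
    (hWmeas.comp (measurable_id.prodMk measurable_const)) hhyl

/-- second half of Lemma `ve`, upper bound for `Λ*` for NKG:
if `W ≥ 0` (jointly measurable and bounded on bounded `s`-sets, as follows from the
NKG growth assumptions) satisfies the hylomorphy condition `W(x, s̄) ≤ ½α²s̄²` for
some `α, s̄ > 0` and all `x`, then
`Λ* = inf { [∫ ½|ψ̂|² + ½|∇ψ|² + W(x,|ψ|)] / |Re ∫ i ψ̂ ψ̄| } ≤ α`. -/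
theorem stmt14 (N : ℕ) (hN : 1 ≤ N)
    (W : EuclideanSpace ℝ (Fin N) → ℝ → ℝ)
    (hWmeas : Measurable (Function.uncurry W))
    (hWnn : ∀ x s, 0 ≤ s → 0 ≤ W x s)
    (α sbar : ℝ) (hα : 0 < α) (hsbar : 0 < sbar)
    (hhyl : ∀ x, W x sbar ≤ 1 / 2 * α ^ 2 * sbar ^ 2)
    (hWbd : ∃ Cb : ℝ, ∀ x s, 0 ≤ s → s ≤ sbar → W x s ≤ Cb) :
    sInf {r : ℝ | ∃ ψ ψh : EuclideanSpace ℝ (Fin N) → ℂ,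
      Integrable (fun x =>
        1 / 2 * ‖ψh x‖ ^ 2 + 1 / 2 * ‖fderiv ℝ ψ x‖ ^ 2 + W x ‖ψ x‖) ∧
      Integrable (fun x => (Complex.I * ψh x * (starRingEnd ℂ) (ψ x)).re) ∧
      (∫ x, (Complex.I * ψh x * (starRingEnd ℂ) (ψ x)).re) ≠ 0 ∧
      r = (∫ x, (1 / 2 * ‖ψh x‖ ^ 2 + 1 / 2 * ‖fderiv ℝ ψ x‖ ^ 2 + W x ‖ψ x‖)) /
            |∫ x, (Complex.I * ψh x * (starRingEnd ℂ) (ψ x)).re|}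
      ≤ α :=
  stmt14_general N hN W hWmeas hWnn α sbar hα hsbar hhyl
end
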